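/- For a closed proper convex function f : ℝ^m → (−∞, +∞] and t > 0, the Moreau–Yosida envelope E_f^t(x) := min_y { f(y) + (1/(2t))‖y − x‖² } is convex and continuously differentiable, with ∇E_f^t(x) = (x − Prox_{tf}(x))/t. -/

import Mathlib

/-!
The prox point `p` of `x` satisfies the subgradient inequality `f p + ⟪x - p, y - p⟫ / t ≤ f y`.
Inserted into the formula for the envelope it shows that `g x = (x - prox x) / t` is a
subgradient of `env` at `x`, while testing the minimisation defining `env u` with the candidate
`prox x` gives the upper bound `env u ≤ env x + ⟪g x, u - x⟫ + ‖u - x‖² / (2t)`. A function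
squeezed between such tangent planes and parabolas is convex and differentiable with gradient `g`.
Adding the subgradient inequalities at two prox points shows that `prox` is firmly nonexpansive,
hence `1`-Lipschitz, so `g` is continuous.
-/

open Set Filter Topology RealInnerProductSpace

variable {E : Type*} [NormedAddCommGroup E] [InnerProductSpace ℝ E] {f : E → ℝ} {t : ℝ}

theorem hasGradientAt_of_le_add_sq [CompleteSpace E] {φ : E → ℝ} {g x : E} {C : ℝ}
    (hlow : ∀ u, φ x + ⟪g, u - x⟫ ≤ φ u)
    (hup : ∀ u, φ u ≤ φ x + ⟪g, u - x⟫ + C * ‖u - x‖ ^ 2) :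
    HasGradientAt φ g x := by
  rw [hasGradientAt_iff_isLittleO]
  have hsq : (fun u => ‖u - x‖ ^ 2) =o[𝓝 x] fun u => u - x :=
    (Asymptotics.isLittleO_norm_pow_id one_lt_two).comp_tendsto
      (tendsto_sub_nhds_zero_iff.2 tendsto_id)
  refine (Asymptotics.IsBigO.of_bound C (Eventually.of_forall fun u => ?_)).trans_isLittleO hsq
  rw [Real.norm_eq_abs, abs_of_nonneg (by linarith [hlow u]), norm_pow, norm_norm]
  linarith [hup u]

theorem convexOn_univ_of_le_add_inner {φ : E → ℝ} {g : E → E}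
    (h : ∀ x u, φ x + ⟪g x, u - x⟫ ≤ φ u) : ConvexOn ℝ univ φ := by
  refine ⟨convex_univ, fun x _ y _ a b ha hb hab => ?_⟩
  set z := a • x + b • y
  have hx := mul_le_mul_of_nonneg_left (h z x) ha
  have hy := mul_le_mul_of_nonneg_left (h z y) hb
  have hzero : a * ⟪g z, x - z⟫ + b * ⟪g z, y - z⟫ = 0 := by
    rw [← real_inner_smul_right, ← real_inner_smul_right, ← inner_add_right]
    have hcomb : a • (x - z) + b • (y - z) = 0 := calc
      _ = (a • x + b • y) - (a + b) • z := by module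
      _ = 0 := by rw [hab, one_smul, sub_self]
    rw [hcomb, inner_zero_right]
  simp only [smul_eq_mul]
  linear_combination hx + hy - φ z * hab - hzero

theorem lipschitzWith_one_of_norm_sub_sq_le_inner {T : E → E}
    (hT : ∀ x y, ‖T x - T y‖ ^ 2 ≤ ⟪x - y, T x - T y⟫) : LipschitzWith 1 T := by
  refine LipschitzWith.of_dist_le_mul fun x y => ?_
  rw [NNReal.coe_one, one_mul, dist_eq_norm, dist_eq_norm]
  rcases (norm_nonneg (T x - T y)).eq_or_lt with hzero | hpos
  · rw [← hzero]
    exact norm_nonneg _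
  · refine le_of_mul_le_mul_right ?_ hpos
    rw [← sq]
    exact (hT x y).trans (real_inner_le_norm _ _)

def IsProx (f : E → ℝ) (t : ℝ) (x p : E) : Prop :=
  IsMinOn (fun y => f y + (1 / (2 * t)) * ‖y - x‖ ^ 2) univ p

namespace IsProx

theorem add_inner_le (hf : ConvexOn ℝ univ f) {x p : E} (hp : IsProx f t x p) (y : E) :
    f p + (1 / t) * ⟪x - p, y - p⟫ ≤ f y := by
  -- compare `p` with the points `p + l • (y - p)` of the segment to `y`, then let `l → 0`
  set c := 1 / (2 * t)
  set a := f p + (1 / t) * ⟪x - p, y - p⟫ - f y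
  have hsmall : ∀ l ∈ Ioc (0 : ℝ) 1, a ≤ l * (c * ‖y - p‖ ^ 2) := by
    rintro l ⟨hl0, hl1⟩
    have hmin : f p + c * ‖p - x‖ ^ 2 ≤ f (p + l • (y - p)) + c * ‖p + l • (y - p) - x‖ ^ 2 :=
      hp (mem_univ _)
    have hconv : f (p + l • (y - p)) ≤ (1 - l) * f p + l * f y := by
      have := hf.2 (mem_univ p) (mem_univ y) (by linarith : 0 ≤ 1 - l) hl0.le (sub_add_cancel 1 l)
      rwa [show (1 - l) • p + l • y = p + l • (y - p) by module] at this
    have hexpand : ‖p + l • (y - p) - x‖ ^ 2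
        = ‖p - x‖ ^ 2 - 2 * l * ⟪x - p, y - p⟫ + l ^ 2 * ‖y - p‖ ^ 2 := by
      rw [show p + l • (y - p) - x = -(x - p) + l • (y - p) by module, norm_add_sq_real,
        inner_neg_left, real_inner_smul_right, norm_neg, norm_smul, Real.norm_eq_abs,
        abs_of_pos hl0, norm_sub_rev p x]
      ring
    refine le_of_mul_le_mul_left ?_ hl0
    rw [hexpand] at hmin
    linear_combination hmin + hconv
  have hlim : Tendsto (fun l => l * (c * ‖y - p‖ ^ 2)) (𝓝[>] 0) (𝓝 0) :=
    ((continuous_mul_const _).tendsto' 0 0 (zero_mul _)).mono_left nhdsWithin_le_nhds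
  exact sub_nonpos.mp (ge_of_tendsto hlim (eventually_of_mem (Ioc_mem_nhdsGT one_pos) hsmall))

theorem norm_sub_sq_le_inner (hf : ConvexOn ℝ univ f) (ht : 0 < t) {x y p q : E}
    (hp : IsProx f t x p) (hq : IsProx f t y q) : ‖p - q‖ ^ 2 ≤ ⟪x - y, p - q⟫ := by
  have hpq := hp.add_inner_le hf q
  have hqp := hq.add_inner_le hf p
  have hsum : ⟪x - p, q - p⟫ + ⟪y - q, p - q⟫ = ‖p - q‖ ^ 2 - ⟪x - y, p - q⟫ := by
    rw [← neg_sub p q, inner_neg_right, neg_add_eq_sub, ← inner_sub_left,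
      show y - q - (x - p) = (p - q) - (x - y) by abel, inner_sub_left,
      real_inner_self_eq_norm_sq]
  refine sub_nonpos.mp (nonpos_of_mul_nonpos_right ?_ (one_div_pos.mpr ht))
  linear_combination hpq + hqp - (1 / t) * hsum

end IsProx

section Envelope

variable {prox : E → E} {env : E → ℝ}

theorem envelope_le_add_inner_add_sq (hprox : ∀ x, IsProx f t x (prox x))
    (henv : ∀ x, env x = f (prox x) + (1 / (2 * t)) * ‖prox x - x‖ ^ 2) (x u : E) :
    env u ≤ env x + ⟪(1 / t) • (x - prox x), u - x⟫ + (1 / (2 * t)) * ‖u - x‖ ^ 2 := by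
  have hmin : env u ≤ f (prox x) + (1 / (2 * t)) * ‖prox x - u‖ ^ 2 := by
    rw [henv u]
    exact hprox u (mem_univ _)
  have hexpand : ‖prox x - u‖ ^ 2 = ‖prox x - x‖ ^ 2 + 2 * ⟪x - prox x, u - x⟫ + ‖u - x‖ ^ 2 := by
    rw [show prox x - u = -(x - prox x) - (u - x) by abel, norm_sub_sq_real, inner_neg_left,
      norm_neg, norm_sub_rev x]
    ring
  rw [henv x, real_inner_smul_left]
  rw [hexpand] at hmin
  linear_combination hmin

theorem add_inner_le_envelope (hf : ConvexOn ℝ univ f) (ht : 0 < t)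
    (hprox : ∀ x, IsProx f t x (prox x))
    (henv : ∀ x, env x = f (prox x) + (1 / (2 * t)) * ‖prox x - x‖ ^ 2) (x u : E) :
    env x + ⟪(1 / t) • (x - prox x), u - x⟫ ≤ env u := by
  have hsub := (hprox x).add_inner_le hf (prox u)
  have hgap : 0 ≤ (1 / (2 * t)) * ‖(x - prox x) - (u - prox u)‖ ^ 2 := by positivity
  rw [show prox u - prox x = (u - x) + ((x - prox x) - (u - prox u)) by abel, inner_add_right,
    inner_sub_right (x - prox x) (x - prox x), real_inner_self_eq_norm_sq] at hsub
  rw [norm_sub_sq_real] at hgap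
  rw [henv x, henv u, real_inner_smul_left, norm_sub_rev (prox x), norm_sub_rev (prox u)]
  linear_combination hsub + hgap

end Envelope

theorem moreau_envelope_gradient_general (m : ℕ) (f : EuclideanSpace ℝ (Fin m) → ℝ)
    (hconv : ConvexOn ℝ Set.univ f)
    (t : ℝ) (ht : 0 < t)
    (prox : EuclideanSpace ℝ (Fin m) → EuclideanSpace ℝ (Fin m))
    (hprox : ∀ x, IsMinOn (fun y => f y + (1 / (2 * t)) * ‖y - x‖ ^ 2) Set.univ (prox x))
    (env : EuclideanSpace ℝ (Fin m) → ℝ)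
    (henv : ∀ x, env x = f (prox x) + (1 / (2 * t)) * ‖prox x - x‖ ^ 2) :
    ConvexOn ℝ Set.univ env ∧
      (∀ x, HasGradientAt env ((1 / t) • (x - prox x)) x) ∧
      Continuous fun x => (1 / t) • (x - prox x) := by
  have hlow := add_inner_le_envelope hconv ht hprox henv
  have hup := envelope_le_add_inner_add_sq hprox henv
  have hlip : LipschitzWith 1 prox := lipschitzWith_one_of_norm_sub_sq_le_inner fun x y =>
    IsProx.norm_sub_sq_le_inner hconv ht (hprox x) (hprox y)
  exact ⟨convexOn_univ_of_le_add_inner hlow, fun x => hasGradientAt_of_le_add_sq (hlow x) (hup x),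
    (continuous_id.sub hlip.continuous).const_smul (1 / t)⟩

/-- The Moreau–Yosida envelope `E_f^t` of a closed proper convex function `f` is
convex and continuously differentiable, with `∇E_f^t(x) = (x − Prox_{tf}(x))/t`. -/
theorem moreau_envelope_gradient (m : ℕ) (f : EuclideanSpace ℝ (Fin m) → ℝ)
    (hconv : ConvexOn ℝ Set.univ f) (hlsc : LowerSemicontinuous f)
    (t : ℝ) (ht : 0 < t)
    (prox : EuclideanSpace ℝ (Fin m) → EuclideanSpace ℝ (Fin m))
    (hprox : ∀ x, IsMinOn (fun y => f y + (1 / (2 * t)) * ‖y - x‖ ^ 2) Set.univ (prox x))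
    (env : EuclideanSpace ℝ (Fin m) → ℝ)
    (henv : ∀ x, env x = f (prox x) + (1 / (2 * t)) * ‖prox x - x‖ ^ 2) :
    ConvexOn ℝ Set.univ env ∧
      (∀ x, HasGradientAt env ((1 / t) • (x - prox x)) x) ∧
      Continuous fun x => (1 / t) • (x - prox x) :=
  moreau_envelope_gradient_general m f hconv t ht prox hprox env henv
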